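/- arXiv:1602.04922 — 2 statements merged into one kernel-verified Lean document; each statement's English description precedes it below -/
import Mathlib

section
/- There do not exist two distinct feasible diagonals of positive polarity with the same pole; that is, there are no indices i, j, k with j ∈ ⟨i+1..k−1⟩ such that (i,k) and (j,k) are both feasible diagonals, all points v_{i+1},…,v_{k−1} lie in Π⁺(i,k), and all points v_{j+1},…,v_{k−1} lie in Π⁺(j,k). Symmetrically, no two distinct feasible diagonals of negative polarity have the same pole. -/
noncomputable section

namespace BNC

/-- The Euclidean plane. -/
abbrev Pt : Type := EuclideanSpace ℝ (Fin 2)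

/-- Planar cross product (determinant) of two vectors. -/
def cross (u w : Pt) : ℝ := u 0 * w 1 - u 1 * w 0

/-- `v` lists points in strictly convex position in counterclockwise order:
every point distinct from `v i` and `v (i+1)` lies strictly to the left of the
directed line from `v i` to `v (i+1)`.  (This also forces no three of the
points to be collinear.) -/
def ConvexCCW {n : ℕ} (v : ZMod n → Pt) : Prop :=
  ∀ i j : ZMod n, j ≠ i → j ≠ i + 1 → 0 < cross (v (i + 1) - v i) (v j - v i)

/-- The cyclic arc of indices `i, i+1, …, j` (mod `n`). -/
def arc {n : ℕ} (i j : ZMod n) : Finset (ZMod n) :=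
  Finset.image (fun t : ℕ => i + (t : ZMod n)) (Finset.range ((j - i).val + 1))

/-- The turning angle `τ(i,j)`: the sum over `k ∈ ⟨i+1..j−1⟩` of the unsigned
angle between `v (k+1) − v k` and `v k − v (k−1)`. -/
def tau {n : ℕ} (v : ZMod n → Pt) (i j : ZMod n) : ℝ :=
  ∑ k ∈ arc (i + 1) (j - 1),
    InnerProductGeometry.angle (v (k + 1) - v k) (v k - v (k - 1))

/-- The length of the segment joining the two points of an unordered pair. -/
def pairDist {n : ℕ} (v : ZMod n → Pt) : Sym2 (ZMod n) → ℝ :=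
  Sym2.lift ⟨fun a b => dist (v a) (v b), fun a b => dist_comm (v a) (v b)⟩

/-- The closed segment joining the two points of an unordered pair. -/
def pairSeg {n : ℕ} (v : ZMod n → Pt) : Sym2 (ZMod n) → Set Pt :=
  Sym2.lift ⟨fun a b => segment ℝ (v a) (v b), fun a b => segment_symm ℝ (v a) (v b)⟩

/-- `M` is a perfect matching of the index set `A`: a set of non-degenerate
unordered pairs of indices from `A` such that every index of `A` belongs to
exactly one pair. -/
def IsMatchingOn {n : ℕ} (A : Set (ZMod n)) (M : Set (Sym2 (ZMod n))) : Prop :=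
  (∀ e ∈ M, ¬ e.IsDiag) ∧ (∀ e ∈ M, ∀ k, k ∈ e → k ∈ A) ∧
    (∀ k ∈ A, ∃! e, e ∈ M ∧ k ∈ e)

/-- The closed segments of distinct pairs of `M` are pairwise disjoint. -/
def NonCrossing {n : ℕ} (v : ZMod n → Pt) (M : Set (Sym2 (ZMod n))) : Prop :=
  ∀ e ∈ M, ∀ e' ∈ M, e ≠ e' → Disjoint (pairSeg v e) (pairSeg v e')

/-- The bottleneck value of a matching: the maximal segment length. -/
def bnM {n : ℕ} (v : ZMod n → Pt) (M : Set (Sym2 (ZMod n))) : ℝ :=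
  sSup (pairDist v '' M)

/-- A non-crossing perfect matching of the whole point set. -/
def IsNCMatching {n : ℕ} (v : ZMod n → Pt) (M : Set (Sym2 (ZMod n))) : Prop :=
  IsMatchingOn Set.univ M ∧ NonCrossing v M

/-- A bottleneck matching: a non-crossing matching minimizing the bottleneck value. -/
def IsBottleneck {n : ℕ} (v : ZMod n → Pt) (M : Set (Sym2 (ZMod n))) : Prop :=
  IsNCMatching v M ∧ ∀ M', IsNCMatching v M' → bnM v M ≤ bnM v M'

/-- A pair is an edge of the full polygon iff it is of the form `{k, k+1}`. -/
def IsPolyEdge {n : ℕ} (e : Sym2 (ZMod n)) : Prop := ∃ k : ZMod n, e = s(k, k + 1)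

/-- The diagonals of a matching of the full point set. -/
def fullDiags {n : ℕ} (M : Set (Sym2 (ZMod n))) : Set (Sym2 (ZMod n)) :=
  {e ∈ M | ¬ IsPolyEdge e}

/-- The full polygon: the convex hull of all the points. -/
def fullPoly {n : ℕ} (v : ZMod n → Pt) : Set Pt := convexHull ℝ (Set.range v)

/-- The interior of the polygon `Poly` minus the union of the segments of the
diagonals from `D`. -/
def regionSpace {n : ℕ} (v : ZMod n → Pt) (Poly : Set Pt) (D : Set (Sym2 (ZMod n))) :
    Set Pt :=
  interior Poly \ ⋃ e ∈ D, pairSeg v e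

/-- `R` is a region: the closure of a connected component of the interior of the
polygon minus the union of the diagonal segments. -/
def IsRegion {n : ℕ} (v : ZMod n → Pt) (Poly : Set Pt) (D : Set (Sym2 (ZMod n)))
    (R : Set Pt) : Prop :=
  ∃ x ∈ regionSpace v Poly D, R = closure (connectedComponentIn (regionSpace v Poly D) x)

/-- The diagonals from `D` whose segment lies on the boundary of `R`. -/
def boundDiags {n : ℕ} (v : ZMod n → Pt) (Poly : Set Pt) (D : Set (Sym2 (ZMod n)))
    (R : Set Pt) : Set (Sym2 (ZMod n)) :=
  {e ∈ D | pairSeg v e ⊆ frontier R}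

/-- `R` is a region bounded by exactly `k` diagonals. -/
def KBounded {n : ℕ} (v : ZMod n → Pt) (Poly : Set Pt) (D : Set (Sym2 (ZMod n)))
    (R : Set Pt) (k : ℕ) : Prop :=
  IsRegion v Poly D R ∧ (boundDiags v Poly D R).ncard = k

/-- The graph whose vertices are the diagonals of `D`, two being adjacent iff
some 2-bounded region has both on its boundary. -/
def cascadeGraph {n : ℕ} (v : ZMod n → Pt) (Poly : Set Pt) (D : Set (Sym2 (ZMod n))) :
    SimpleGraph D where
  Adj a b := a ≠ b ∧ ∃ R : Set Pt, KBounded v Poly D R 2 ∧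
      pairSeg v a.1 ⊆ frontier R ∧ pairSeg v b.1 ⊆ frontier R
  symm := by
    constructor
    rintro a b ⟨hab, R, h1, h2, h3⟩
    exact ⟨hab.symm, R, h1, h3, h2⟩
  loopless := by constructor; rintro a ⟨h, -⟩; exact h rfl

/-- The number of cascades: the number of connected components of the cascade graph. -/
def cascadeCount {n : ℕ} (v : ZMod n → Pt) (Poly : Set Pt) (D : Set (Sym2 (ZMod n))) : ℕ :=
  Nat.card (cascadeGraph v Poly D).ConnectedComponent

/-- A pair is a diagonal relative to the arc `⟨i..j⟩` iff it is neither `{i,j}`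
nor of the form `{k, k+1}` with both `k` and `k+1` in the arc. -/
def ArcDiag {n : ℕ} (i j : ZMod n) (e : Sym2 (ZMod n)) : Prop :=
  e ≠ s(i, j) ∧ ∀ k : ZMod n, k ∈ arc i j → k + 1 ∈ arc i j → e ≠ s(k, k + 1)

/-- The convex hull of the points of the arc `⟨i..j⟩`. -/
def arcPoly {n : ℕ} (v : ZMod n → Pt) (i j : ZMod n) : Set Pt :=
  convexHull ℝ (v '' (arc i j : Set (ZMod n)))

/-- The diagonals (relative to the arc `⟨i..j⟩`) of a matching `M`. -/
def arcDiags {n : ℕ} (i j : ZMod n) (M : Set (Sym2 (ZMod n))) : Set (Sym2 (ZMod n)) :=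
  {e ∈ M | ArcDiag i j e}

/-- `M` is admissible for the subproblem `Matching(i,j)`: it is a non-crossing
perfect matching of the points of the arc `⟨i..j⟩`, it has at most one cascade,
and any region whose boundary contains the segment `[v i, v j]` has at most one
diagonal of `M` on its boundary. -/
def Admissible {n : ℕ} (v : ZMod n → Pt) (i j : ZMod n) (M : Set (Sym2 (ZMod n))) : Prop :=
  IsMatchingOn (↑(arc i j)) M ∧ NonCrossing v M ∧
    cascadeCount v (arcPoly v i j) (arcDiags i j M) ≤ 1 ∧
    ∀ R : Set Pt, IsRegion v (arcPoly v i j) (arcDiags i j M) R →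
      segment ℝ (v i) (v j) ⊆ frontier R →
      (boundDiags v (arcPoly v i j) (arcDiags i j M) R).ncard ≤ 1

/-- `S i j`: the optimal value of the subproblem `Matching(i,j)`. -/
def S {n : ℕ} (v : ZMod n → Pt) (i j : ZMod n) : ℝ :=
  sInf (bnM v '' {M | Admissible v i j M})

/-- The pair `(i,j)` is necessary: every admissible matching attaining `S i j`
contains the pair `{i,j}`. -/
def Necessary {n : ℕ} (v : ZMod n → Pt) (i j : ZMod n) : Prop :=
  ∀ M : Set (Sym2 (ZMod n)), Admissible v i j M → bnM v M = S v i j → s(i, j) ∈ M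

/-- The closed right side of the directed line from `v i` to `v j`. -/
def rightClosed {n : ℕ} (v : ZMod n → Pt) (i j : ZMod n) : Set Pt :=
  {P : Pt | cross (v j - v i) (P - v i) ≤ 0}

/-- The region `Π⁺(i,j)`. -/
def PiPlus {n : ℕ} (v : ZMod n → Pt) (i j : ZMod n) : Set Pt :=
  {P ∈ rightClosed v i j |
    Real.pi / 3 ≤ EuclideanGeometry.angle (v i) P (v j) ∧ dist (v i) (v j) ≤ dist P (v i)}

/-- The region `Π⁻(i,j)`. -/
def PiMinus {n : ℕ} (v : ZMod n → Pt) (i j : ZMod n) : Set Pt :=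
  {P ∈ rightClosed v i j |
    Real.pi / 3 ≤ EuclideanGeometry.angle (v i) P (v j) ∧ dist (v i) (v j) ≤ dist P (v j)}

/-- `(i,j)` is a feasible pair: the arc `⟨i..j⟩` has an even number of points. -/
def Feasible {n : ℕ} (i j : ZMod n) : Prop := Even (arc i j).card

/-- `(i,j)` is a diagonal pair (not an edge, not degenerate). -/
def IsDiagPair {n : ℕ} (i j : ZMod n) : Prop := i ≠ j ∧ j ≠ i + 1 ∧ i ≠ j + 1

/-- `(i,j)` is a candidate diagonal: a feasible diagonal that is necessary and
whose turning angle is at most `2π/3`. -/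
def Candidate {n : ℕ} (v : ZMod n → Pt) (i j : ZMod n) : Prop :=
  Feasible i j ∧ IsDiagPair i j ∧ Necessary v i j ∧ tau v i j ≤ 2 * Real.pi / 3

end BNC

/-!
Let `K = v k` be the common pole and put `A = v i`, `B = v j`, `C = v (j + 1)` (for negative
polarity, `A = v a`, `B = v b`, `C = v (b - 1)`). The memberships `B, C ∈ Π⁺(i, k)` and
`C ∈ Π⁺(j, k)` each give a triangle whose angle at the apex is at least `π / 3` and whose side
opposite `K` is at least the side opposite the apex; hence `∠ A K B ≥ π / 3` and
`∠ B K C ≥ π / 3`. Convexity puts `B` inside the angle `A K C`, so `∠ A K C ≥ 2π / 3`, and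
together with `∠ A C K ≥ π / 3` this leaves no room for the angle at `A` of the nondegenerate
triangle `A K C`.
-/

open EuclideanGeometry Real

namespace EuclideanGeometry

variable {V P : Type*} [NormedAddCommGroup V] [InnerProductSpace ℝ V] [MetricSpace P]
  [NormedAddTorsor V P]

theorem not_collinear_of_dist_le_of_angle_ne_zero {p₁ p₂ p₃ : P} (h₂₃ : p₂ ≠ p₃)
    (hangle : ∠ p₁ p₂ p₃ ≠ 0) (hdist : dist p₁ p₃ ≤ dist p₁ p₂) :
    ¬Collinear ℝ ({p₁, p₂, p₃} : Set P) := by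
  rw [collinear_iff_eq_or_eq_or_angle_eq_zero_or_angle_eq_pi]
  rintro (rfl | rfl | h0 | hpi)
  · exact h₂₃ (by simpa using hdist)
  · exact h₂₃ rfl
  · exact hangle h0
  · have := dist_eq_add_dist_of_angle_eq_pi hpi
    exact h₂₃ (dist_le_zero.1 (by linarith)).symm

theorem angle_le_angle_of_dist_le_of_angle_ne_zero {p₁ p₂ p₃ : P} (h₂₃ : p₂ ≠ p₃)
    (hangle : ∠ p₁ p₂ p₃ ≠ 0) (hdist : dist p₁ p₃ ≤ dist p₁ p₂) :
    ∠ p₁ p₂ p₃ ≤ ∠ p₁ p₃ p₂ := by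
  have h := not_collinear_of_dist_le_of_angle_ne_zero h₂₃ hangle hdist
  rw [Set.pair_comm] at h
  exact (angle_le_iff_dist_le h).2 hdist

end EuclideanGeometry

namespace BNC

section PiCond

variable {V P : Type*} [NormedAddCommGroup V] [InnerProductSpace ℝ V] [MetricSpace P]
  [NormedAddTorsor V P]

/-- The metric part of `Π⁺(i, j)` is `PiCond (v i) (v j)`, that of `Π⁻(i, j)` is
`PiCond (v j) (v i)`. -/
def PiCond (x y q : P) : Prop := π / 3 ≤ ∠ x q y ∧ dist x y ≤ dist q x

theorem PiCond.not_collinear {x y q : P} (h : PiCond x y q) (hqy : q ≠ y) :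
    ¬Collinear ℝ ({x, q, y} : Set P) :=
  not_collinear_of_dist_le_of_angle_ne_zero hqy (by linarith [h.1, Real.pi_pos])
    (by rw [dist_comm x q]; exact h.2)

theorem PiCond.pi_div_three_le_angle {x y q : P} (h : PiCond x y q) (hqy : q ≠ y) :
    π / 3 ≤ ∠ x y q :=
  h.1.trans <| angle_le_angle_of_dist_le_of_angle_ne_zero hqy
    (by linarith [h.1, Real.pi_pos]) (by rw [dist_comm x q]; exact h.2)

theorem PiCond.false_of_wbtw_sameRay {a b c k x : P} (hbk : b ≠ k) (hck : c ≠ k)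
    (hx : Wbtw ℝ a x c) (hxb : SameRay ℝ (x -ᵥ k) (b -ᵥ k))
    (hb : PiCond a k b) (hc : PiCond a k c) (hbc : PiCond b k c) : False := by
  have hack : ¬Collinear ℝ ({a, c, k} : Set P) := hc.not_collinear hck
  obtain ⟨t, ht₀, hxt⟩ := hxb.exists_nonneg_right (vsub_ne_zero.2 hbk)
  have ht : 0 < t := by
    refine ht₀.lt_of_ne fun h0 => hack ?_
    rw [← h0, zero_smul, vsub_eq_zero_iff_eq] at hxt
    subst hxt
    simpa [Set.insert_comm, Set.pair_comm] using hx.collinear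
  have hadd : ∠ a k b + ∠ b k c = ∠ a k c := by
    rw [← angle_smul_right_of_pos a ht hxt.symm, ← angle_smul_left_of_pos c ht hxt.symm]
    exact angle_add_of_ne_of_ne (ne₁₃_of_not_collinear hack).symm hck.symm hx
  have hsum := angle_add_angle_add_angle_eq_pi c (ne₁₃_of_not_collinear hack).symm
  have hcak : 0 < ∠ c a k := angle_pos_of_not_collinear (by rwa [Set.insert_comm])
  linarith [hb.pi_div_three_le_angle hbk, hbc.pi_div_three_le_angle hck, hc.1, angle_comm k c a]

end PiCond

section Arc

variable {n : ℕ} [NeZero n]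

theorem mem_arc_iff {i j x : ZMod n} : x ∈ arc i j ↔ (x - i).val ≤ (j - i).val := by
  simp only [arc, Finset.mem_image, Finset.mem_range, Nat.lt_succ_iff]
  constructor
  · rintro ⟨t, ht, rfl⟩
    rwa [add_sub_cancel_left, ZMod.val_cast_of_lt (ht.trans_lt (ZMod.val_lt _))]
  · intro h
    exact ⟨(x - i).val, h, by rw [ZMod.natCast_zmod_val, add_sub_cancel]⟩

theorem left_mem_arc (i j : ZMod n) : i ∈ arc i j := by
  simp [mem_arc_iff]

theorem right_mem_arc (i j : ZMod n) : j ∈ arc i j :=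
  mem_arc_iff.2 le_rfl

theorem add_one_mem_arc {i j x : ZMod n} (hx : x ∈ arc i j) (hxj : x ≠ j) :
    x + 1 ∈ arc i j := by
  rw [mem_arc_iff] at hx ⊢
  have hlt : (x - i).val < (j - i).val :=
    hx.lt_of_ne fun h => hxj (sub_left_inj.1 (ZMod.val_injective n h))
  have hone : (1 : ZMod n).val ≤ 1 := by
    rw [← Nat.cast_one, ZMod.val_natCast]; exact Nat.mod_le 1 n
  calc (x + 1 - i).val = (x - i + 1).val := by rw [sub_add_eq_add_sub]
    _ ≤ (x - i).val + (1 : ZMod n).val := ZMod.val_add_le _ _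
    _ ≤ (j - i).val := by omega

theorem sub_one_mem_arc {i j x : ZMod n} (hx : x ∈ arc i j) (hxi : x ≠ i) :
    x - 1 ∈ arc i j := by
  rw [mem_arc_iff] at hx ⊢
  have hpos : 0 < (x - i).val := ZMod.val_pos.2 (sub_ne_zero.2 hxi)
  have hone : (1 : ZMod n).val ≤ (x - i).val := by
    rw [← Nat.cast_one, ZMod.val_natCast]; exact (Nat.mod_le 1 n).trans hpos
  rw [sub_right_comm, ZMod.val_sub hone]
  omega

end Arc

def orient (a b c : Pt) : ℝ := cross (b - a) (c - a)

theorem orient_rotate (a b c : Pt) : orient a b c = orient b c a := by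
  simp only [orient, cross, PiLp.sub_apply]; ring

theorem orient_swap (a b c : Pt) : orient a c b = -orient a b c := by
  simp only [orient, cross, PiLp.sub_apply]; ring

theorem ne_of_orient_ne_zero {a b c : Pt} (h : orient a b c ≠ 0) : a ≠ b ∧ a ≠ c := by
  constructor <;> rintro rfl <;> simp [orient, cross] at h

theorem orient_smul_add_orient_smul (a b c k : Pt) :
    orient k b c • (a - k) + orient k a b • (c - k) = orient k a c • (b - k) := by
  ext i
  fin_cases i <;>
    simp only [orient, cross, Fin.zero_eta, Fin.mk_one, PiLp.add_apply, PiLp.sub_apply,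
      PiLp.smul_apply, smul_eq_mul] <;>
    ring

/-- The ray from `k` through `b` meets `[a, c]` at the point with weights proportional to
`orient k b c` and `orient k a b`, by Cramer's rule `orient_smul_add_orient_smul`. -/
theorem exists_wbtw_sameRay_of_orient_nonneg {a b c k : Pt} (hab : 0 ≤ orient k a b)
    (hbc : 0 ≤ orient k b c) (hpos : 0 < orient k a b + orient k b c)
    (hac : 0 ≤ orient k a c) : ∃ x, Wbtw ℝ a x c ∧ SameRay ℝ (x -ᵥ k) (b -ᵥ k) := by
  set s := orient k a b + orient k b c
  refine ⟨AffineMap.lineMap a c (orient k a b / s),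
    wbtw_lineMap_iff.2 (.inr ⟨by positivity, (div_le_one hpos).2 (by linarith)⟩), ?_⟩
  have hx : AffineMap.lineMap a c (orient k a b / s) -ᵥ k = (orient k a c / s) • (b -ᵥ k) := by
    have hs : s ≠ 0 := hpos.ne'
    apply smul_right_injective Pt hs
    dsimp only
    rw [smul_smul, mul_div_cancel₀ _ hs, vsub_eq_sub, vsub_eq_sub, ← orient_smul_add_orient_smul,
      AffineMap.lineMap_apply, vsub_eq_sub, vadd_eq_add, smul_sub, smul_add, smul_smul,
      mul_div_cancel₀ _ hs]
    simp only [s]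
    module
  rw [hx]
  exact SameRay.sameRay_nonneg_smul_left _ (by positivity)

theorem false_of_piPlus_of_piPlus {n : ℕ} [NeZero n] {v : ZMod n → Pt} (hv : ConvexCCW v)
    {i j k : ZMod n} (hj : j ∈ arc (i + 1) (k - 1)) (hkj : k ≠ j) (hkj' : k ≠ j + 1)
    (hik : ∀ l ∈ arc (i + 1) (k - 1), v l ∈ PiPlus v i k)
    (hjk : ∀ l ∈ arc (j + 1) (k - 1), v l ∈ PiPlus v j k) : False := by
  have hj' : j + 1 ∈ arc (i + 1) (k - 1) :=
    add_one_mem_arc hj fun h => hkj' (by rw [h, sub_add_cancel])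
  have hturn : 0 < orient (v k) (v j) (v (j + 1)) := by
    rw [orient_rotate]; exact hv j k hkj hkj'
  obtain ⟨hkb, hkc⟩ := ne_of_orient_ne_zero hturn.ne'
  have hside {l} (hl : l ∈ arc (i + 1) (k - 1)) : 0 ≤ orient (v k) (v i) (v l) := by
    rw [orient_rotate, orient_swap]; exact neg_nonneg.2 (hik l hl).1
  obtain ⟨x, hx, hxb⟩ := exists_wbtw_sameRay_of_orient_nonneg (hside hj) hturn.le
    (by linarith [hside hj]) (hside hj')
  exact PiCond.false_of_wbtw_sameRay hkb.symm hkc.symm hx hxb (hik j hj).2 (hik _ hj').2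
    (hjk _ (left_mem_arc _ _)).2

theorem piCond_of_mem_piMinus {n : ℕ} {v : ZMod n → Pt} {i j : ZMod n} {p : Pt}
    (h : p ∈ PiMinus v i j) : PiCond (v j) (v i) p := by
  obtain ⟨-, hangle, hdist⟩ := h
  exact ⟨by rwa [angle_comm], by rwa [dist_comm]⟩

theorem false_of_piMinus_of_piMinus {n : ℕ} [NeZero n] {v : ZMod n → Pt} (hv : ConvexCCW v)
    {k a b : ZMod n} (hb : b ∈ arc (k + 1) (a - 1)) (hkb : k ≠ b) (hbk : b ≠ k + 1)
    (hka : ∀ l ∈ arc (k + 1) (a - 1), v l ∈ PiMinus v k a)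
    (hkb' : ∀ l ∈ arc (k + 1) (b - 1), v l ∈ PiMinus v k b) : False := by
  have hb' : b - 1 ∈ arc (k + 1) (a - 1) := sub_one_mem_arc hb hbk
  have hturn : 0 < orient (v k) (v (b - 1)) (v b) := by
    rw [orient_rotate, orient]
    simpa only [sub_add_cancel] using
      hv (b - 1) k (fun h => hbk (by rw [h, sub_add_cancel])) (by rwa [sub_add_cancel])
  obtain ⟨hkc, hkb⟩ := ne_of_orient_ne_zero hturn.ne'
  have hside {l} (hl : l ∈ arc (k + 1) (a - 1)) : 0 ≤ orient (v k) (v l) (v a) := by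
    rw [orient_swap]; exact neg_nonneg.2 (hka l hl).1
  obtain ⟨x, hx, hxb⟩ := exists_wbtw_sameRay_of_orient_nonneg hturn.le (hside hb)
    (by linarith [hside hb]) (hside hb')
  exact PiCond.false_of_wbtw_sameRay hkb.symm hkc.symm hx.symm hxb
    (piCond_of_mem_piMinus (hka b hb)) (piCond_of_mem_piMinus (hka _ hb'))
    (piCond_of_mem_piMinus (hkb' _ (right_mem_arc _ _)))

end BNC

theorem stmt16_general (n : ℕ) [NeZero n]
    (v : ZMod n → BNC.Pt) (hv : BNC.ConvexCCW v) :
    (¬ ∃ i j k : ZMod n, j ∈ BNC.arc (i + 1) (k - 1) ∧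
        BNC.Feasible i k ∧ BNC.IsDiagPair i k ∧
        BNC.Feasible j k ∧ BNC.IsDiagPair j k ∧
        (∀ l ∈ BNC.arc (i + 1) (k - 1), v l ∈ BNC.PiPlus v i k) ∧
        (∀ l ∈ BNC.arc (j + 1) (k - 1), v l ∈ BNC.PiPlus v j k)) ∧
    (¬ ∃ k a b : ZMod n, b ∈ BNC.arc (k + 1) (a - 1) ∧
        BNC.Feasible k a ∧ BNC.IsDiagPair k a ∧
        BNC.Feasible k b ∧ BNC.IsDiagPair k b ∧
        (∀ l ∈ BNC.arc (k + 1) (a - 1), v l ∈ BNC.PiMinus v k a) ∧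
        (∀ l ∈ BNC.arc (k + 1) (b - 1), v l ∈ BNC.PiMinus v k b)) := by
  constructor
  · rintro ⟨i, j, k, hj, -, -, -, ⟨hjk, hkj, -⟩, hik, hjk'⟩
    exact BNC.false_of_piPlus_of_piPlus hv hj (Ne.symm hjk) hkj hik hjk'
  · rintro ⟨k, a, b, hb, -, -, -, ⟨hkb, hbk, -⟩, hka, hkb'⟩
    exact BNC.false_of_piMinus_of_piMinus hv hb hkb hbk hka hkb'

/-- No two distinct feasible diagonals of positive polarity have the same pole,
and no two distinct feasible diagonals of negative polarity have the same pole. -/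
theorem stmt16 (n : ℕ) [NeZero n] (hn : 4 ≤ n) (hEven : Even n)
    (v : ZMod n → BNC.Pt) (hv : BNC.ConvexCCW v) :
    (¬ ∃ i j k : ZMod n, j ∈ BNC.arc (i + 1) (k - 1) ∧
        BNC.Feasible i k ∧ BNC.IsDiagPair i k ∧
        BNC.Feasible j k ∧ BNC.IsDiagPair j k ∧
        (∀ l ∈ BNC.arc (i + 1) (k - 1), v l ∈ BNC.PiPlus v i k) ∧
        (∀ l ∈ BNC.arc (j + 1) (k - 1), v l ∈ BNC.PiPlus v j k)) ∧
    (¬ ∃ k a b : ZMod n, b ∈ BNC.arc (k + 1) (a - 1) ∧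
        BNC.Feasible k a ∧ BNC.IsDiagPair k a ∧
        BNC.Feasible k b ∧ BNC.IsDiagPair k b ∧
        (∀ l ∈ BNC.arc (k + 1) (a - 1), v l ∈ BNC.PiMinus v k a) ∧
        (∀ l ∈ BNC.arc (k + 1) (b - 1), v l ∈ BNC.PiMinus v k b)) :=
  stmt16_general n v hv
end
end

section
/- Let P be a finite set of an even number of points in the plane with no three points collinear, and let M be a perfect matching of P by straight line segments that minimizes the total sum of the lengths of its segments over all perfect matchings of P. Then M is non-crossing: the closed segments of distinct pairs of M are pairwise disjoint. -/
noncomputable section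

/-!
If two segments `[a,b]` and `[c,d]` of a perfect matching meet at a point `x`, rematching them as
`{a,c}, {b,d}` gives another perfect matching, and by the triangle inequality through `x`,
`|ac| + |bd| ≤ |ax| + |xc| + |bx| + |xd| = |ab| + |cd|`. The inequality is strict: equality would
put `x` on `[a,c]` too, and then either `x = a` lies on `[c,d]` or `a, b, c` lie on the line `ax`.
-/

section PerfectMatching

variable {α : Type*}

def IsPerfectMatching (P : Set α) (M : Finset (Sym2 α)) : Prop :=
  (∀ e ∈ M, ¬ e.IsDiag) ∧ (∀ e ∈ M, ∀ p ∈ e, p ∈ P) ∧ (∀ p ∈ P, ∃! e, e ∈ M ∧ p ∈ e)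

namespace IsPerfectMatching

variable {P : Set α} {M : Finset (Sym2 α)} {a b c d p : α} {e e' : Sym2 α}

theorem ne_of_mk_mem (hM : IsPerfectMatching P M) (he : s(a, b) ∈ M) : a ≠ b :=
  fun h => hM.1 _ he (Sym2.mk_isDiag_iff.2 h)

theorem notMem_of_notMem (hM : IsPerfectMatching P M) (hp : p ∉ P) (he : p ∈ e) : e ∉ M :=
  fun h => hp (hM.2.1 e h p he)

theorem eq_of_mem (hM : IsPerfectMatching P M) (he : e ∈ M) (he' : e' ∈ M) (hp : p ∈ e)
    (hp' : p ∈ e') : e = e' :=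
  (hM.2.2 p (hM.2.1 e he p hp)).unique ⟨he, hp⟩ ⟨he', hp'⟩

theorem notMem_of_ne (hM : IsPerfectMatching P M) (he : e ∈ M) (he' : e' ∈ M) (hne : e ≠ e')
    (hp : p ∈ e) : p ∉ e' :=
  fun hp' => hne (hM.eq_of_mem he he' hp hp')

theorem ne_of_mk_mem_of_ne (hM : IsPerfectMatching P M) (he : s(a, b) ∈ M) (he' : s(c, d) ∈ M)
    (hne : s(a, b) ≠ s(c, d)) : a ≠ c ∧ a ≠ d ∧ b ≠ c ∧ b ≠ d := by
  have hnot : ∀ {p}, p ∈ s(a, b) → p ∉ s(c, d) := hM.notMem_of_ne he he' hne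
  refine ⟨?_, ?_, ?_, ?_⟩ <;> rintro rfl
  exacts [hnot (Sym2.mem_mk_left _ _) (Sym2.mem_mk_left _ _),
    hnot (Sym2.mem_mk_left _ _) (Sym2.mem_mk_right _ _),
    hnot (Sym2.mem_mk_right _ _) (Sym2.mem_mk_left _ _),
    hnot (Sym2.mem_mk_right _ _) (Sym2.mem_mk_right _ _)]

variable [DecidableEq α]

theorem erase (hM : IsPerfectMatching P M) (he : s(a, b) ∈ M) :
    IsPerfectMatching (P \ {a, b}) (M.erase s(a, b)) := by
  refine ⟨fun e he' => hM.1 e (Finset.mem_of_mem_erase he'), ?_, ?_⟩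
  · intro e he' p hp
    obtain ⟨hne, heM⟩ := Finset.mem_erase.1 he'
    refine ⟨hM.2.1 e heM p hp, ?_⟩
    rintro (rfl | rfl)
    exacts [hM.notMem_of_ne heM he hne hp (Sym2.mem_mk_left _ _),
      hM.notMem_of_ne heM he hne hp (Sym2.mem_mk_right _ _)]
  · rintro p ⟨hp, hpab⟩
    obtain ⟨f, ⟨hf, hpf⟩, huniq⟩ := hM.2.2 p hp
    have hfab : f ≠ s(a, b) := by
      rintro rfl
      exact hpab (by simpa using Sym2.mem_iff.1 hpf)
    exact ⟨f, ⟨Finset.mem_erase.2 ⟨hfab, hf⟩, hpf⟩,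
      fun g ⟨hg, hpg⟩ => huniq g ⟨Finset.mem_of_mem_erase hg, hpg⟩⟩

theorem insert_mk (hM : IsPerfectMatching P M) (hab : a ≠ b) (ha : a ∉ P) (hb : b ∉ P) :
    IsPerfectMatching (insert a (insert b P)) (insert s(a, b) M) := by
  have hnew : ∀ g ∈ insert s(a, b) M, (a ∈ g ∨ b ∈ g) → g = s(a, b) := by
    intro g hg hg'
    rcases Finset.mem_insert.1 hg with rfl | hg
    · rfl
    · rcases hg' with h | h
      exacts [absurd hg (hM.notMem_of_notMem ha h), absurd hg (hM.notMem_of_notMem hb h)]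
  refine ⟨?_, ?_, ?_⟩
  · intro e he
    rcases Finset.mem_insert.1 he with rfl | he
    exacts [Sym2.mk_isDiag_iff.not.2 hab, hM.1 e he]
  · intro e he p hp
    rcases Finset.mem_insert.1 he with rfl | he
    · rcases Sym2.mem_iff.1 hp with rfl | rfl <;> simp
    · exact Or.inr (Or.inr (hM.2.1 e he p hp))
  · rintro p (rfl | rfl | hp)
    · exact ⟨_, ⟨Finset.mem_insert_self _ _, Sym2.mem_mk_left _ _⟩,
        fun g ⟨hg, hpg⟩ => hnew g hg (Or.inl hpg)⟩
    · exact ⟨_, ⟨Finset.mem_insert_self _ _, Sym2.mem_mk_right _ _⟩,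
        fun g ⟨hg, hpg⟩ => hnew g hg (Or.inr hpg)⟩
    · obtain ⟨f, ⟨hf, hpf⟩, huniq⟩ := hM.2.2 p hp
      refine ⟨f, ⟨Finset.mem_insert_of_mem hf, hpf⟩, fun g ⟨hg, hpg⟩ => ?_⟩
      rcases Finset.mem_insert.1 hg with rfl | hg
      · rcases Sym2.mem_iff.1 hpg with rfl | rfl
        exacts [absurd hp ha, absurd hp hb]
      · exact huniq g ⟨hg, hpg⟩

theorem exists_rematch {β : Type*} [AddCommMonoid β] (hM : IsPerfectMatching P M)
    (he : s(a, b) ∈ M) (he' : s(c, d) ∈ M) (hne : s(a, b) ≠ s(c, d)) :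
    ∃ M', IsPerfectMatching P M' ∧ ∀ f : Sym2 α → β,
      ∑ e ∈ M', f e + (f s(a, b) + f s(c, d)) = ∑ e ∈ M, f e + (f s(a, c) + f s(b, d)) := by
  have hab : a ≠ b := hM.ne_of_mk_mem he
  have hcd : c ≠ d := hM.ne_of_mk_mem he'
  obtain ⟨hac, had, hbc, hbd⟩ := hM.ne_of_mk_mem_of_ne he he' hne
  have he'' : s(c, d) ∈ M.erase s(a, b) := Finset.mem_erase.2 ⟨hne.symm, he'⟩
  set N := (M.erase s(a, b)).erase s(c, d)
  have hN : IsPerfectMatching ((P \ {a, b}) \ {c, d}) N := (hM.erase he).erase he''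
  have hN₁ := hN.insert_mk hbd (by simp) (by simp)
  have hN₂ := hN₁.insert_mk hac (by simp [hab, had]) (by simp [hbc.symm, hcd])
  refine ⟨insert s(a, c) (insert s(b, d) N), ?_, fun f => ?_⟩
  · convert hN₂ using 1
    have := hM.2.1 _ he
    have := hM.2.1 _ he'
    ext p
    by_cases p = a <;> by_cases p = b <;> by_cases p = c <;> by_cases p = d <;> simp_all
  · rw [Finset.sum_insert (hN₁.notMem_of_notMem (by simp [hab, had]) (Sym2.mem_mk_left _ _)),
      Finset.sum_insert (hN.notMem_of_notMem (by simp) (Sym2.mem_mk_left _ _)),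
      ← Finset.add_sum_erase _ _ he, ← Finset.add_sum_erase _ _ he'']
    abel

end IsPerfectMatching

end PerfectMatching

theorem dist_add_dist_lt_of_wbtw_of_wbtw {V P : Type*} [NormedAddCommGroup V] [NormedSpace ℝ V]
    [StrictConvexSpace ℝ V] [MetricSpace P] [NormedAddTorsor V P] {a b c d x : P}
    (hab : Wbtw ℝ a x b) (hcd : Wbtw ℝ c x d)
    (habc : ¬ Collinear ℝ ({a, b, c} : Set P)) (hacd : ¬ Collinear ℝ ({a, c, d} : Set P)) :
    dist a c + dist b d < dist a b + dist c d := by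
  have hxac : ¬ Wbtw ℝ a x c := by
    intro hac
    rcases eq_or_ne a x with rfl | hax
    · exact hacd (by simpa [Set.insert_comm] using hcd.collinear)
    · have hline : ∀ p, Wbtw ℝ a x p → p ∈ line[ℝ, a, x] := fun p h =>
        h.collinear.mem_affineSpan_of_mem_of_ne (by simp) (by simp) (by simp) hax
      exact habc (collinear_triple_of_mem_affineSpan_pair (left_mem_affineSpan_pair ℝ a x)
        (hline b hab) (hline c hac))
  calc dist a c + dist b d < (dist a x + dist x c) + (dist b x + dist x d) :=
        add_lt_add_of_lt_of_le (dist_lt_dist_add_dist_iff.2 hxac) (dist_triangle b x d)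
    _ = dist a b + dist c d := by
        rw [← hab.dist_add_dist, ← hcd.dist_add_dist, dist_comm b x, dist_comm x c]; ring

theorem stmt19_general (P : Finset BNC.Pt)
    (hcol : ∀ p ∈ P, ∀ q ∈ P, ∀ r ∈ P, p ≠ q → q ≠ r → p ≠ r →
      ¬ Collinear ℝ ({p, q, r} : Set BNC.Pt))
    (M : Finset (Sym2 BNC.Pt))
    (hM : (∀ e ∈ M, ¬ e.IsDiag) ∧ (∀ e ∈ M, ∀ p ∈ e, p ∈ P) ∧
      (∀ p ∈ P, ∃! e, e ∈ M ∧ p ∈ e))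
    (hmin : ∀ M' : Finset (Sym2 BNC.Pt),
      ((∀ e ∈ M', ¬ e.IsDiag) ∧ (∀ e ∈ M', ∀ p ∈ e, p ∈ P) ∧
        (∀ p ∈ P, ∃! e, e ∈ M' ∧ p ∈ e)) →
      ∑ e ∈ M, Sym2.lift ⟨fun a b => dist a b, fun a b => dist_comm a b⟩ e ≤
        ∑ e ∈ M', Sym2.lift ⟨fun a b => dist a b, fun a b => dist_comm a b⟩ e) :
    ∀ e ∈ M, ∀ e' ∈ M, e ≠ e' →
      Disjoint
        (Sym2.lift ⟨fun a b => segment ℝ a b, fun a b => segment_symm ℝ a b⟩ e)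
        (Sym2.lift ⟨fun a b => segment ℝ a b, fun a b => segment_symm ℝ a b⟩ e') := by
  have hPM : IsPerfectMatching (P : Set BNC.Pt) M := hM
  intro e he e' he' hne
  induction e using Sym2.ind with | _ a b => ?_
  induction e' using Sym2.ind with | _ c d => ?_
  refine Set.disjoint_left.2 fun x hxab hxcd => ?_
  have hmem : ∀ {p e}, e ∈ M → p ∈ e → p ∈ P := fun he hp => hPM.2.1 _ he _ hp
  obtain ⟨hac, had, hbc, -⟩ := hPM.ne_of_mk_mem_of_ne he he' hne
  have hshorter : dist a c + dist b d < dist a b + dist c d :=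
    dist_add_dist_lt_of_wbtw_of_wbtw (mem_segment_iff_wbtw.1 hxab) (mem_segment_iff_wbtw.1 hxcd)
      (hcol a (hmem he (by simp)) b (hmem he (by simp)) c (hmem he' (by simp))
        (hPM.ne_of_mk_mem he) hbc hac)
      (hcol a (hmem he (by simp)) c (hmem he' (by simp)) d (hmem he' (by simp))
        hac (hPM.ne_of_mk_mem he') had)
  obtain ⟨M', hM', hsum⟩ := hPM.exists_rematch (β := ℝ) he he' hne
  have hle := hmin M' hM'
  have hsum := hsum (Sym2.lift ⟨fun a b => dist a b, fun a b => dist_comm a b⟩)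
  simp only [Sym2.lift_mk] at hsum
  linarith

/-- A perfect matching of a finite planar point set (no three points collinear)
minimizing the total sum of segment lengths is non-crossing. -/
theorem stmt19 (P : Finset BNC.Pt) (hP : Even P.card)
    (hcol : ∀ p ∈ P, ∀ q ∈ P, ∀ r ∈ P, p ≠ q → q ≠ r → p ≠ r →
      ¬ Collinear ℝ ({p, q, r} : Set BNC.Pt))
    (M : Finset (Sym2 BNC.Pt))
    (hM : (∀ e ∈ M, ¬ e.IsDiag) ∧ (∀ e ∈ M, ∀ p ∈ e, p ∈ P) ∧
      (∀ p ∈ P, ∃! e, e ∈ M ∧ p ∈ e))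
    (hmin : ∀ M' : Finset (Sym2 BNC.Pt),
      ((∀ e ∈ M', ¬ e.IsDiag) ∧ (∀ e ∈ M', ∀ p ∈ e, p ∈ P) ∧
        (∀ p ∈ P, ∃! e, e ∈ M' ∧ p ∈ e)) →
      ∑ e ∈ M, Sym2.lift ⟨fun a b => dist a b, fun a b => dist_comm a b⟩ e ≤
        ∑ e ∈ M', Sym2.lift ⟨fun a b => dist a b, fun a b => dist_comm a b⟩ e) :
    ∀ e ∈ M, ∀ e' ∈ M, e ≠ e' →
      Disjoint
        (Sym2.lift ⟨fun a b => segment ℝ a b, fun a b => segment_symm ℝ a b⟩ e)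
        (Sym2.lift ⟨fun a b => segment ℝ a b, fun a b => segment_symm ℝ a b⟩ e') :=
  stmt19_general P hcol M hM hmin
end
end
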